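/- Let w, w*, Y be square-integrable random variables with positive variances such that E[w* | w] = w (equivalently, Cov(w, w* - w) = 0 holds because w* - w is orthogonal to w). If Var(w*)/Var(w) ≤ 1/(1-R²) for R² ∈ [0,1), then |Cov(w - w*, Y)| ≤ √(1 - cor²(w, Y)) · √((R²/(1-R²))·Var(w)·Var(Y)). -/

import Mathlib

/-!
Put `ε = w* - w`. Being uncorrelated with `w`, `ε` satisfies `Var w* = Var w + Var ε`, so the
hypothesis on `Var w* / Var w` bounds `Var ε` by `R² / (1 - R²) · Var w`. For the same reason
`Cov(ε, Y)` equals the covariance of `ε` with the residual `Y - (Cov(w, Y) / Var w) · w`, whose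
variance is `(1 - cor²(w, Y)) · Var Y`; Cauchy–Schwarz against this residual gives the bound.
-/

open MeasureTheory

/-- Expectation of a real random variable. -/
noncomputable def expec {Ω : Type*} [MeasurableSpace Ω] (μ : Measure Ω) (X : Ω → ℝ) : ℝ :=
  ∫ ω, X ω ∂μ

/-- Covariance of two real random variables. -/
noncomputable def cov {Ω : Type*} [MeasurableSpace Ω] (μ : Measure Ω) (X Y : Ω → ℝ) : ℝ :=
  expec μ (fun ω => (X ω - expec μ X) * (Y ω - expec μ Y))

/-- Variance of a real random variable. -/
noncomputable def Var {Ω : Type*} [MeasurableSpace Ω] (μ : Measure Ω) (X : Ω → ℝ) : ℝ :=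
  cov μ X X

/-- Pearson correlation of two real random variables. -/
noncomputable def cor {Ω : Type*} [MeasurableSpace Ω] (μ : Measure Ω) (X Y : Ω → ℝ) : ℝ :=
  cov μ X Y / Real.sqrt (Var μ X * Var μ Y)

namespace ProbabilityTheory

variable {Ω : Type*} {mΩ : MeasurableSpace Ω} {μ : Measure Ω} [IsFiniteMeasure μ] {X Y Z : Ω → ℝ}

lemma sq_covariance_le_variance_mul (hX : MemLp X 2 μ) (hY : MemLp Y 2 μ) :
    cov[X, Y; μ] ^ 2 ≤ Var[X; μ] * Var[Y; μ] := by
  have hquad : ∀ t : ℝ, 0 ≤ Var[X; μ] * (t * t) + 2 * cov[X, Y; μ] * t + Var[Y; μ] := by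
    intro t
    have h := variance_fun_add (hX.const_mul t) hY
    rw [variance_const_mul, covariance_const_mul_left] at h
    nlinarith [variance_nonneg (fun ω => t * X ω + Y ω) μ]
  have := discrim_le_zero hquad
  rw [discrim] at this
  nlinarith

lemma variance_sub_projection (hY : MemLp Y 2 μ) (hZ : MemLp Z 2 μ) :
    Var[fun ω => Y ω - cov[Z, Y; μ] / Var[Z; μ] * Z ω; μ]
      = Var[Y; μ] - cov[Z, Y; μ] ^ 2 / Var[Z; μ] := by
  rw [variance_fun_sub hY (hZ.const_mul _), variance_const_mul, covariance_const_mul_right,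
    covariance_comm]
  rcases eq_or_ne Var[Z; μ] 0 with hZ0 | hZ0
  · simp [hZ0]
  · field_simp
    ring

lemma sq_covariance_le_of_covariance_eq_zero (hX : MemLp X 2 μ) (hY : MemLp Y 2 μ)
    (hZ : MemLp Z 2 μ) (hXZ : cov[X, Z; μ] = 0) :
    cov[X, Y; μ] ^ 2 ≤ Var[X; μ] * (Var[Y; μ] - cov[Z, Y; μ] ^ 2 / Var[Z; μ]) := by
  have hproj : cov[X, fun ω => Y ω - cov[Z, Y; μ] / Var[Z; μ] * Z ω; μ] = cov[X, Y; μ] := by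
    rw [covariance_fun_sub_right hX hY (hZ.const_mul _), covariance_const_mul_right, hXZ,
      mul_zero, sub_zero]
  rw [← hproj, ← variance_sub_projection hY hZ]
  exact sq_covariance_le_variance_mul hX (hY.sub (hZ.const_mul _))

end ProbabilityTheory

open ProbabilityTheory

lemma Var_eq_variance {Ω : Type*} [MeasurableSpace Ω] {μ : Measure Ω} {X : Ω → ℝ}
    (hX : AEMeasurable X μ) : Var μ X = Var[X; μ] :=
  covariance_self hX

lemma cov_eq_covariance {Ω : Type*} [MeasurableSpace Ω] {μ : Measure Ω} (X Y : Ω → ℝ) :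
    cov μ X Y = cov[X, Y; μ] :=
  rfl

theorem stmt_6_general {Ω : Type*} [MeasurableSpace Ω] (μ : Measure Ω) [IsProbabilityMeasure μ]
    (w wstar Y : Ω → ℝ) (R2 : ℝ)
    (hw : MemLp w 2 μ) (hwstar : MemLp wstar 2 μ) (hY : MemLp Y 2 μ)
    (hVw : 0 < Var μ w) (hVY : 0 < Var μ Y)
    (horth : cov μ w (fun ω => wstar ω - w ω) = 0)
    (hR2 : 0 ≤ R2 ∧ R2 < 1)
    (hvar : Var μ wstar / Var μ w ≤ 1 / (1 - R2)) :
    |cov μ (fun ω => w ω - wstar ω) Y|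
      ≤ Real.sqrt (1 - (cor μ w Y) ^ 2) *
        Real.sqrt ((R2 / (1 - R2)) * Var μ w * Var μ Y) := by
  obtain ⟨hR0, hR1⟩ := hR2
  set ε := fun ω => wstar ω - w ω
  have hε : MemLp ε 2 μ := hwstar.sub hw
  have hcor : 1 - cor μ w Y ^ 2 = (Var μ Y - cov μ w Y ^ 2 / Var μ w) / Var μ Y := by
    rw [cor, div_pow, Real.sq_sqrt (by positivity)]
    field_simp
  simp only [cov_eq_covariance, Var_eq_variance hw.aemeasurable, Var_eq_variance hY.aemeasurable,
    Var_eq_variance hwstar.aemeasurable] at *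
  have hsplit : Var[wstar; μ] = Var[w; μ] + Var[ε; μ] := by
    have h := variance_fun_add hw hε
    simp only [ε, add_sub_cancel, horth] at h
    linarith
  have hVε : Var[ε; μ] ≤ R2 / (1 - R2) * Var[w; μ] := by
    rw [hsplit, div_le_div_iff₀ hVw (by linarith)] at hvar
    rw [div_mul_eq_mul_div, le_div_iff₀ (by linarith)]
    linarith
  have hres : 0 ≤ Var[Y; μ] - cov[w, Y; μ] ^ 2 / Var[w; μ] :=
    variance_sub_projection hY hw ▸ variance_nonneg _ _
  have hCS := sq_covariance_le_of_covariance_eq_zero hε hY hw (by rwa [covariance_comm])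
  rw [covariance_fun_sub_left hw hwstar hY, ← neg_sub, abs_neg,
    ← covariance_fun_sub_left hwstar hw hY, ← Real.sqrt_mul' _ (by positivity)]
  refine Real.abs_le_sqrt ?_
  calc cov[ε, Y; μ] ^ 2 ≤ Var[ε; μ] * (Var[Y; μ] - cov[w, Y; μ] ^ 2 / Var[w; μ]) := hCS
    _ ≤ R2 / (1 - R2) * Var[w; μ] * (Var[Y; μ] - cov[w, Y; μ] ^ 2 / Var[w; μ]) := by gcongr
    _ = _ := by rw [hcor]; field_simp

theorem stmt_6 {Ω : Type*} [MeasurableSpace Ω] (μ : Measure Ω) [IsProbabilityMeasure μ]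
    (w wstar Y : Ω → ℝ) (R2 : ℝ)
    (hw : MemLp w 2 μ) (hwstar : MemLp wstar 2 μ) (hY : MemLp Y 2 μ)
    (hVw : 0 < Var μ w) (hVwstar : 0 < Var μ wstar) (hVY : 0 < Var μ Y)
    (horth : cov μ w (fun ω => wstar ω - w ω) = 0)
    (hR2 : 0 ≤ R2 ∧ R2 < 1)
    (hvar : Var μ wstar / Var μ w ≤ 1 / (1 - R2)) :
    |cov μ (fun ω => w ω - wstar ω) Y|
      ≤ Real.sqrt (1 - (cor μ w Y) ^ 2) *
        Real.sqrt ((R2 / (1 - R2)) * Var μ w * Var μ Y) :=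
  stmt_6_general μ w wstar Y R2 hw hwstar hY hVw hVY horth hR2 hvar
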